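/- Let X : Ω → (Fin n → ℝ), n ≥ 2, be a random vector of integrable coordinates X₁,…,Xₙ such that for every pair 1 ≤ i < j ≤ n the joint law ρ_{ij} of (Xᵢ, Xⱼ) on ℝ × ℝ is absolutely continuous with respect to two-dimensional Lebesgue measure with marginal densities f_i, f_j, and E[|Xᵢ − Xⱼ|] < ∞. Let π_{j,i}(x) = condCDF(ρ_{ij}) x x and π_{i,j}(x) = condCDF(ρ'_{ij}) x x, where ρ'_{ij} is the pushforward of ρ_{ij} under the coordinate swap. Then the Gini mean difference satisfies GMDₙ = (1/C(n,2)) Σ_{1≤i<j≤n} ∫_ℝ x·[2 f_i(x)·π_{j,i}(x) + 2 f_j(x)·π_{i,j}(x) − f_i(x) − f_j(x)] dx. -/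

import Mathlib

/-!
Off the diagonal, `|x - y| = x (2·1{y ≤ x} - 1) + y (2·1{x ≤ y} - 1)`, and a law `ρ` of a pair
`(X, Y)` without mass on the diagonal sees only this region. Disintegrating `ρ` along its first
coordinate with the kernel whose distribution functions are `condCDF ρ a` turns the first term
into `∫ a (2 condCDF ρ a a - 1) dρ₁(a)`; the second term is the same quantity for the swapped law.
Expressing the marginals `ρ₁`, `ρ₂` through their densities gives the integrand of the closed
form for each pair `i < j`.
-/

open MeasureTheory ProbabilityTheory Set

namespace ProbabilityTheory

variable {α : Type*} [MeasurableSpace α]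

noncomputable def condCDFKernel (ρ : Measure (α × ℝ)) [IsFiniteMeasure ρ] : Kernel α ℝ :=
  ((isCondKernelCDF_condCDF ρ).toKernel _).comap (fun a => ((), a)) measurable_prodMk_left

lemma condCDFKernel_apply (ρ : Measure (α × ℝ)) [IsFiniteMeasure ρ] (a : α) :
    condCDFKernel ρ a = (condCDF ρ a).measure := rfl

instance (ρ : Measure (α × ℝ)) [IsFiniteMeasure ρ] : IsMarkovKernel (condCDFKernel ρ) := by
  unfold condCDFKernel; infer_instance

lemma fst_compProd_condCDFKernel (ρ : Measure (α × ℝ)) [IsFiniteMeasure ρ] :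
    ρ.fst ⊗ₘ condCDFKernel ρ = ρ := by
  have h : Kernel.prodMkLeft Unit (condCDFKernel ρ) = (isCondKernelCDF_condCDF ρ).toKernel _ := by
    ext ⟨_, a⟩ : 2
    rfl
  rw [Measure.compProd, h, compProd_toKernel]
  rfl

lemma integral_ite_le_condCDFKernel (ρ : Measure (α × ℝ)) [IsFiniteMeasure ρ] (a : α) (x c : ℝ) :
    ∫ y, (if y ≤ x then c else -c) ∂(condCDFKernel ρ a) = c * (2 * condCDF ρ a x - 1) := by
  have h : (fun y : ℝ => if y ≤ x then c else -c)
      = fun y => (Iic x).indicator (fun _ => 2 * c) y - c := by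
    ext y
    simp only [indicator_apply, mem_Iic]
    split_ifs <;> ring
  rw [h, integral_sub ((integrable_const _).indicator measurableSet_Iic) (integrable_const _),
    integral_indicator_const _ measurableSet_Iic, integral_const, measureReal_def, measureReal_def,
    condCDFKernel_apply, measure_condCDF_Iic, measure_condCDF_univ,
    ENNReal.toReal_ofReal (condCDF_nonneg ρ a x), ENNReal.toReal_one, smul_eq_mul, one_smul]
  ring

lemma measurable_condCDF_comp (ρ : Measure (α × ℝ)) [IsFiniteMeasure ρ] {g : α → ℝ}
    (hg : Measurable g) : Measurable fun a => condCDF ρ a (g a) := by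
  have h := (condCDFKernel ρ).measurable_kernel_prodMk_left
    (measurableSet_le measurable_snd (hg.comp measurable_fst))
  change Measurable fun a => (condCDF ρ a).measure (Iic (g a)) at h
  simpa only [measure_condCDF_Iic, ENNReal.toReal_ofReal (condCDF_nonneg ρ _ _)]
    using h.ennreal_toReal

section Diagonal

variable (ρ : Measure (ℝ × ℝ))

lemma integrable_ite_snd_le_fst (h : Integrable (fun p : ℝ × ℝ => p.1) ρ) :
    Integrable (fun p : ℝ × ℝ => if p.2 ≤ p.1 then p.1 else -p.1) ρ := by
  refine h.mono ?_ (.of_forall fun p => ?_)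
  · exact (Measurable.ite (measurableSet_le measurable_snd measurable_fst) measurable_fst
      measurable_fst.neg).aestronglyMeasurable
  · split_ifs <;> simp

lemma integral_ite_snd_le_fst [IsFiniteMeasure ρ] (h : Integrable (fun p : ℝ × ℝ => p.1) ρ) :
    ∫ p : ℝ × ℝ, (if p.2 ≤ p.1 then p.1 else -p.1) ∂ρ
      = ∫ a, a * (2 * condCDF ρ a a - 1) ∂ρ.fst := by
  have h' := integrable_ite_snd_le_fst ρ h
  rw [← fst_compProd_condCDFKernel ρ] at h'
  conv_lhs => rw [← fst_compProd_condCDFKernel ρ]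
  rw [Measure.integral_compProd h']
  simp only [integral_ite_le_condCDFKernel]

lemma integrable_mul_two_condCDF_diag_sub_one [IsFiniteMeasure ρ]
    (h : Integrable (fun p : ℝ × ℝ => p.1) ρ) :
    Integrable (fun a => a * (2 * condCDF ρ a a - 1)) ρ.fst := by
  have h_id : Integrable (fun a : ℝ => a) ρ.fst :=
    (integrable_map_measure aestronglyMeasurable_id measurable_fst.aemeasurable).2 h
  refine h_id.mono ?_ (.of_forall fun a => ?_)
  · exact (measurable_id.mul (((measurable_condCDF_comp ρ measurable_id).const_mul 2).sub_const
      1)).aestronglyMeasurable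
  · have h0 := condCDF_nonneg ρ a a
    have h1 := condCDF_le_one ρ a a
    rw [norm_mul]
    exact mul_le_of_le_one_right (norm_nonneg _) (abs_le.2 ⟨by linarith, by linarith⟩)

theorem integral_abs_sub_eq_integral_condCDF_diag [IsFiniteMeasure ρ]
    (hdiag : ρ {p | p.1 = p.2} = 0)
    (h1 : Integrable (fun p : ℝ × ℝ => p.1) ρ) (h2 : Integrable (fun p : ℝ × ℝ => p.2) ρ) :
    ∫ p, |p.1 - p.2| ∂ρ = ∫ a, a * (2 * condCDF ρ a a - 1) ∂ρ.fst
      + ∫ a, a * (2 * condCDF (ρ.map Prod.swap) a a - 1) ∂ρ.snd := by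
  have h2' : Integrable (fun q : ℝ × ℝ => q.1) (ρ.map Prod.swap) :=
    (integrable_map_measure measurable_fst.aestronglyMeasurable measurable_swap.aemeasurable).2 h2
  have hswap := integrable_ite_snd_le_fst _ h2'
  have hswap' : Integrable (fun p : ℝ × ℝ => if p.1 ≤ p.2 then p.2 else -p.2) ρ :=
    (integrable_map_measure hswap.aestronglyMeasurable measurable_swap.aemeasurable).1 hswap
  rw [← integral_ite_snd_le_fst ρ h1, ← Measure.fst_map_swap, ← integral_ite_snd_le_fst _ h2',
    integral_map measurable_swap.aemeasurable hswap.aestronglyMeasurable]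
  simp only [Prod.fst_swap, Prod.snd_swap]
  rw [← integral_add (integrable_ite_snd_le_fst ρ h1) hswap']
  have hae : ∀ᵐ p ∂ρ, p.1 ≠ p.2 := ae_iff.2 (by simpa only [ne_eq, not_not] using hdiag)
  refine integral_congr_ae ?_
  filter_upwards [hae] with p hp
  rcases lt_or_gt_of_ne hp with h | h
  · rw [if_neg h.not_ge, if_pos h.le, abs_of_neg (sub_neg.2 h)]; ring
  · rw [if_pos h.le, if_neg h.not_ge, abs_of_pos (sub_pos.2 h)]; ring

end Diagonal

end ProbabilityTheory

namespace MeasureTheory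

lemma Measure.prod_setOf_fst_eq_snd {α : Type*} [MeasurableSpace α] [MeasurableEq α]
    (μ ν : Measure α) [SFinite ν] [NullSingletonClass ν] : μ.prod ν {p | p.1 = p.2} = 0 := by
  rw [Measure.prod_apply (measurableSet_eq_fun measurable_fst measurable_snd)]
  simp [Set.preimage, measure_singleton]

variable {X : Type*} [MeasurableSpace X] {μ : Measure X} {f : X → ℝ}

lemma integral_withDensity_ofReal (hf : AEMeasurable f μ) (hf0 : 0 ≤ᵐ[μ] f) (g : X → ℝ) :
    ∫ x, g x ∂μ.withDensity (fun x => ENNReal.ofReal (f x)) = ∫ x, f x * g x ∂μ := by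
  rw [integral_withDensity_eq_integral_toReal_smul₀ hf.ennreal_ofReal
    (.of_forall fun _ => ENNReal.ofReal_lt_top)]
  refine integral_congr_ae (hf0.mono fun x hx => ?_)
  simp only [smul_eq_mul, ENNReal.toReal_ofReal hx]

lemma integrable_withDensity_ofReal_iff (hf : AEMeasurable f μ) (hf0 : 0 ≤ᵐ[μ] f) {g : X → ℝ} :
    Integrable g (μ.withDensity fun x => ENNReal.ofReal (f x))
      ↔ Integrable (fun x => f x * g x) μ := by
  rw [integrable_withDensity_iff_integrable_smul₀' hf.ennreal_ofReal
    (.of_forall fun _ => ENNReal.ofReal_lt_top)]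
  refine integrable_congr (hf0.mono fun x hx => ?_)
  simp only [smul_eq_mul, ENNReal.toReal_ofReal hx]

end MeasureTheory

namespace ProbabilityTheory

theorem integral_abs_sub_eq_integral_density (ρ : Measure (ℝ × ℝ)) [IsFiniteMeasure ρ]
    (hdiag : ρ {p | p.1 = p.2} = 0)
    (h1 : Integrable (fun p : ℝ × ℝ => p.1) ρ) (h2 : Integrable (fun p : ℝ × ℝ => p.2) ρ)
    {μ : Measure ℝ} {f g : ℝ → ℝ} (hf : AEMeasurable f μ) (hg : AEMeasurable g μ)
    (hf0 : 0 ≤ᵐ[μ] f) (hg0 : 0 ≤ᵐ[μ] g)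
    (hfst : ρ.fst = μ.withDensity fun x => ENNReal.ofReal (f x))
    (hsnd : ρ.snd = μ.withDensity fun x => ENNReal.ofReal (g x)) :
    ∫ p, |p.1 - p.2| ∂ρ = ∫ x, x * (2 * f x * condCDF ρ x x
      + 2 * g x * condCDF (ρ.map Prod.swap) x x - f x - g x) ∂μ := by
  have h2' : Integrable (fun q : ℝ × ℝ => q.1) (ρ.map Prod.swap) :=
    (integrable_map_measure measurable_fst.aestronglyMeasurable measurable_swap.aemeasurable).2 h2
  have hI1 := integrable_mul_two_condCDF_diag_sub_one ρ h1
  have hI2 := integrable_mul_two_condCDF_diag_sub_one _ h2'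
  rw [Measure.fst_map_swap, hsnd, integrable_withDensity_ofReal_iff hg hg0] at hI2
  rw [hfst, integrable_withDensity_ofReal_iff hf hf0] at hI1
  rw [integral_abs_sub_eq_integral_condCDF_diag ρ hdiag h1 h2, hfst, hsnd,
    integral_withDensity_ofReal hf hf0, integral_withDensity_ofReal hg hg0, ← integral_add hI1 hI2]
  congr 1 with x
  ring

theorem integral_abs_sub_eq_integral_density_of_absolutelyContinuous
    {Ω : Type*} [MeasurableSpace Ω] (P : Measure Ω) [IsFiniteMeasure P] {Y Z : Ω → ℝ}
    (hY : Measurable Y) (hZ : Measurable Z) (hYi : Integrable Y P) (hZi : Integrable Z P)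
    (hac : P.map (fun ω => (Y ω, Z ω)) ≪ (volume : Measure (ℝ × ℝ)))
    {f g : ℝ → ℝ} (hf : Measurable f) (hg : Measurable g) (hf0 : ∀ x, 0 ≤ f x) (hg0 : ∀ x, 0 ≤ g x)
    (hYf : P.map Y = volume.withDensity fun x => ENNReal.ofReal (f x))
    (hZg : P.map Z = volume.withDensity fun x => ENNReal.ofReal (g x)) :
    ∫ ω, |Y ω - Z ω| ∂P = ∫ x, x * (2 * f x * condCDF (P.map fun ω => (Y ω, Z ω)) x x
      + 2 * g x * condCDF ((P.map fun ω => (Y ω, Z ω)).map Prod.swap) x x - f x - g x) := by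
  have hYZ : AEMeasurable (fun ω => (Y ω, Z ω)) P := (hY.prodMk hZ).aemeasurable
  have hdiag : P.map (fun ω => (Y ω, Z ω)) {p | p.1 = p.2} = 0 :=
    hac (by rw [Measure.volume_eq_prod]; exact volume.prod_setOf_fst_eq_snd volume)
  rw [← integral_map (f := fun p : ℝ × ℝ => |p.1 - p.2|) hYZ (by fun_prop)]
  exact integral_abs_sub_eq_integral_density _ hdiag
    ((integrable_map_measure (by fun_prop) hYZ).2 hYi)
    ((integrable_map_measure (by fun_prop) hYZ).2 hZi)
    hf.aemeasurable hg.aemeasurable (.of_forall hf0) (.of_forall hg0)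
    (by rw [Measure.fst_map_prodMk hZ, hYf]) (by rw [Measure.snd_map_prodMk hY, hZg])

end ProbabilityTheory

theorem gmd_closed_form_general
    {Ω : Type*} [MeasurableSpace Ω] (P : Measure Ω) [IsProbabilityMeasure P]
    (n : ℕ) (X : Fin n → Ω → ℝ)
    (hmeas : ∀ i, Measurable (X i))
    (hint : ∀ i, Integrable (X i) P)
    (hac : ∀ i j, i < j →
      P.map (fun ω => (X i ω, X j ω)) ≪ (volume : Measure (ℝ × ℝ)))
    (f : Fin n → ℝ → ℝ)
    (hfmeas : ∀ i, Measurable (f i)) (hfnonneg : ∀ i x, 0 ≤ f i x)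
    (hf : ∀ i, P.map (X i) = volume.withDensity fun x => ENNReal.ofReal (f i x)) :
    (1 / (n.choose 2 : ℝ)) *
        ∑ i : Fin n, ∑ j : Fin n, (if i < j then ∫ ω, |X i ω - X j ω| ∂P else 0)
      = (1 / (n.choose 2 : ℝ)) *
        ∑ i : Fin n, ∑ j : Fin n,
          (if i < j then
            ∫ x, x * (2 * f i x * condCDF (P.map (fun ω => (X i ω, X j ω))) x x
              + 2 * f j x
                  * condCDF ((P.map (fun ω => (X i ω, X j ω))).map Prod.swap) x x
              - f i x - f j x)
          else 0) := by
  refine congrArg _ (Finset.sum_congr rfl fun i _ => Finset.sum_congr rfl fun j _ => ?_)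
  split_ifs with hij
  · exact integral_abs_sub_eq_integral_density_of_absolutelyContinuous P (hmeas i) (hmeas j)
      (hint i) (hint j) (hac i j hij) (hfmeas i) (hfmeas j) (hfnonneg i) (hfnonneg j) (hf i) (hf j)
  · rfl

/-- Closed-form expression for the Gini mean difference of an absolutely continuous random
vector (Theorem 2 of the paper, in the form of equation (8)):
`GMDₙ = (1/C(n,2)) Σ_{i<j} ∫ x (2 fᵢ(x) π_{j,i}(x) + 2 fⱼ(x) π_{i,j}(x) − fᵢ(x) − fⱼ(x)) dx`. -/
theorem gmd_closed_form
    {Ω : Type*} [MeasurableSpace Ω] (P : Measure Ω) [IsProbabilityMeasure P]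
    (n : ℕ) (hn : 2 ≤ n) (X : Fin n → Ω → ℝ)
    (hmeas : ∀ i, Measurable (X i))
    (hint : ∀ i, Integrable (X i) P)
    (hdiff : ∀ i j, Integrable (fun ω => |X i ω - X j ω|) P)
    (hac : ∀ i j, i < j →
      P.map (fun ω => (X i ω, X j ω)) ≪ (volume : Measure (ℝ × ℝ)))
    (f : Fin n → ℝ → ℝ)
    (hfmeas : ∀ i, Measurable (f i)) (hfnonneg : ∀ i x, 0 ≤ f i x)
    (hf : ∀ i, P.map (X i) = volume.withDensity fun x => ENNReal.ofReal (f i x)) :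
    (1 / (n.choose 2 : ℝ)) *
        ∑ i : Fin n, ∑ j : Fin n, (if i < j then ∫ ω, |X i ω - X j ω| ∂P else 0)
      = (1 / (n.choose 2 : ℝ)) *
        ∑ i : Fin n, ∑ j : Fin n,
          (if i < j then
            ∫ x, x * (2 * f i x * condCDF (P.map (fun ω => (X i ω, X j ω))) x x
              + 2 * f j x
                  * condCDF ((P.map (fun ω => (X i ω, X j ω))).map Prod.swap) x x
              - f i x - f j x)
          else 0) :=
  gmd_closed_form_general P n X hmeas hint hac f hfmeas hfnonneg hf
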